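/- Let n be a natural number with 𝒢(n) = g, and let d < g. Then there exists an integer k with 1 ≤ k ≤ n such that 𝒢(n − k, min(2k, n − k)) = d and such that 𝒢(m, m) ≠ d + 1 for every m ≤ n − k; that is, from the position (n, n) there is a move to a position of Grundy value d lying in the first block of positions of value d. -/
import Mathlib


/-- The Grundy values of single-heap Fibonacci nim positions `(n, r)`, where `n` is the heap
size and `r` is the maximal number of tokens that may be removed on the next move:
`grundy n r` is the least natural number not of the form
`grundy (n - k) (min (2 * k) (n - k))` for some `k` with `1 ≤ k ≤ min r n`.
In particular `grundy 0 r = 0` and `grundy n 0 = 0`. -/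
noncomputable def grundy (n r : ℕ) : ℕ :=
  sInf {m : ℕ | ∀ k, 1 ≤ k → k ≤ min r n → grundy (n - k) (min (2 * k) (n - k)) ≠ m}
termination_by n
decreasing_by
  have : k ≤ n := le_trans ‹k ≤ min r n› (min_le_right _ _)
  omega

lemma grundy_eq (n r : ℕ) :
    grundy n r =
      sInf {m : ℕ | ∀ k, 1 ≤ k → k ≤ min r n → grundy (n - k) (min (2 * k) (n - k)) ≠ m} := by
  rw [grundy]

/-- The defining set is nonempty. -/
lemma grundy_set_nonempty (n r : ℕ) :
    {m : ℕ | ∀ k, 1 ≤ k → k ≤ min r n → grundy (n - k) (min (2 * k) (n - k)) ≠ m}.Nonempty := by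
  classical
  set B := (Finset.Icc 1 (min r n)).sup (fun k => grundy (n - k) (min (2 * k) (n - k))) with hB
  refine ⟨B + 1, fun k hk1 hk2 h => ?_⟩
  have : grundy (n - k) (min (2 * k) (n - k)) ≤ B :=
    Finset.le_sup (f := fun k => grundy (n - k) (min (2 * k) (n - k)))
      (Finset.mem_Icc.mpr ⟨hk1, hk2⟩)
  omega

/-- Surjectivity below the mex: every value below `grundy n r` is realized by a move. -/
lemma grundy_exists_move {n r v : ℕ} (h : v < grundy n r) :
    ∃ k, 1 ≤ k ∧ k ≤ min r n ∧ grundy (n - k) (min (2 * k) (n - k)) = v := by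
  by_contra hc
  push_neg at hc
  have hv : v ∈ {m : ℕ | ∀ k, 1 ≤ k → k ≤ min r n →
      grundy (n - k) (min (2 * k) (n - k)) ≠ m} := fun k hk1 hk2 => hc k hk1 hk2
  have := Nat.sInf_le hv
  rw [← grundy_eq] at this
  omega

/-- Monotonicity in the second argument. -/
lemma grundy_mono {n r r' : ℕ} (h : min r n ≤ min r' n) : grundy n r ≤ grundy n r' := by
  rw [grundy_eq n r, grundy_eq n r']
  refine Nat.sInf_le ?_
  have hmem := Nat.sInf_mem (grundy_set_nonempty n r')
  intro k hk1 hk2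
  exact hmem k hk1 (le_trans hk2 h)

/-- Any value attained by some `grundy n r` is attained as a full value `grundy m m`
for some `m ≤ n`. -/
lemma grundy_exists_full : ∀ n, ∀ r v, grundy n r = v → ∃ m ≤ n, grundy m m = v := by
  intro n
  induction n using Nat.strong_induction_on with
  | _ n ih =>
    intro r v hv
    have hle : v ≤ grundy n n := by
      rw [← hv]
      exact grundy_mono (by omega)
    rcases eq_or_lt_of_le hle with heq | hlt
    · exact ⟨n, le_refl n, heq.symm⟩
    · obtain ⟨k, hk1, hk2, hk3⟩ := grundy_exists_move hlt
      have hkn : k ≤ n := le_trans hk2 (min_le_right n n)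
      obtain ⟨m, hm1, hm2⟩ := ih (n - k) (by omega) _ _ hk3
      exact ⟨m, by omega, hm2⟩

/-- Every value at most `grundy n n` is attained as a full value below `n`. -/
lemma grundy_exists_full_le {n v : ℕ} (h : v ≤ grundy n n) : ∃ m ≤ n, grundy m m = v := by
  rcases eq_or_lt_of_le h with heq | hlt
  · exact ⟨n, le_refl n, heq.symm⟩
  · obtain ⟨k, hk1, hk2, hk3⟩ := grundy_exists_move hlt
    have hkn : k ≤ n := le_trans hk2 (min_le_right n n)
    obtain ⟨m, hm1, hm2⟩ := grundy_exists_full (n - k) _ _ hk3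
    exact ⟨m, by omega, hm2⟩

/-- Let `n` be a natural number with `𝒢(n) = g`, and let `d < g`.  Then there is an integer
`k` with `1 ≤ k ≤ n` such that `𝒢(n - k, min (2k) (n - k)) = d` and such that
`𝒢(m, m) ≠ d + 1` for every `m ≤ n - k`; that is, from the position `(n, n)` there is a move
to a position of Grundy value `d` lying in the first block of positions of value `d`. -/
theorem grundy_move_to_first_block (n g d : ℕ) (hg : grundy n n = g) (hd : d < g) :
    ∃ k, 1 ≤ k ∧ k ≤ n ∧ grundy (n - k) (min (2 * k) (n - k)) = d ∧
      ∀ m ≤ n - k, grundy m m ≠ d + 1 := by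
  -- there is some position with full grundy value `d + 1`
  have hex : ∃ m, m ≤ n ∧ grundy m m = d + 1 := grundy_exists_full_le (by omega)
  have hex' : ∃ m, grundy m m = d + 1 := ⟨hex.choose, hex.choose_spec.2⟩
  classical
  set m₀ := Nat.find hex' with hm₀def
  have hm₀ : grundy m₀ m₀ = d + 1 := Nat.find_spec hex'
  have hm₀min : ∀ m < m₀, grundy m m ≠ d + 1 := fun m hm => Nat.find_min hex' hm
  have hm₀n : m₀ ≤ n := le_trans (Nat.find_min' hex' hex.choose_spec.2) hex.choose_spec.1
  -- a move from `m₀` to value `d`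
  have hdlt : d < grundy m₀ m₀ := by omega
  obtain ⟨k₀, hk₀1, hk₀2, hk₀3⟩ := grundy_exists_move hdlt
  have hk₀m₀ : k₀ ≤ m₀ := le_trans hk₀2 (min_le_right m₀ m₀)
  set m := m₀ - k₀ with hmdef
  have hmm₀ : m < m₀ := by omega
  -- full value of `m` is `d`
  have hd_le : d ≤ grundy m m := by
    rw [← hk₀3]
    exact grundy_mono (by omega)
  have hle_d : grundy m m ≤ d := by
    by_contra hc
    push_neg at hc
    obtain ⟨m', hm'1, hm'2⟩ := grundy_exists_full_le (show d + 1 ≤ grundy m m by omega)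
    exact hm₀min m' (by omega) hm'2
  have hgm : grundy m m = d := le_antisymm hle_d hd_le
  -- the move from `n`
  refine ⟨n - m, by omega, by omega, ?_, ?_⟩
  · have hnm : n - (n - m) = m := by omega
    rw [hnm]
    have h1 : grundy m (min (2 * k₀) m) ≤ grundy m (min (2 * (n - m)) m) :=
      grundy_mono (by omega)
    have h2 : grundy m (min (2 * (n - m)) m) ≤ grundy m m := grundy_mono (by omega)
    have h3 : grundy m (min (2 * k₀) m) = d := by
      have : m₀ - k₀ = m := rfl
      rw [← this]
      exact hk₀3
    omega
  · intro m' hm'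
    have : m' < m₀ := by omega
    exact hm₀min m' this
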